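/- Let H_S and A be Hermitian d_S×d_S matrices, let (Π_k)_{k} be a finite family of pairwise orthogonal projectors on ℂ^{d_E} with Σ_k Π_k = 1, let m_k be real numbers, set m̂ = Σ_k m_k Π_k, and let ρ_E = Σ_k q_k Π_k with q_k ≥ 0. Define H_T = H_S⊗1 + A⊗m̂ on ℂ^{d_S}⊗ℂ^{d_E}. Then for every d_S×d_S matrix ρ_S and every t ∈ ℝ: e^{−iH_T t} (ρ_S ⊗ ρ_E) e^{iH_T t} = Σ_k q_k ( U_k(t) ρ_S U_k(t)† ) ⊗ Π_k, where U_k(t) = e^{−i(H_S + m_k A)t}; consequently the reduced system state is Tr_E[ e^{−iH_T t}(ρ_S⊗ρ_E)e^{iH_T t} ] = Σ_k q_k Tr(Π_k) · U_k(t) ρ_S U_k(t)†, a mixture of unitary evolutions. -/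

import Mathlib

/-! Because the `Πₖ` are complete orthogonal idempotents, `B ↦ ∑ₖ Bₖ ⊗ Πₖ` is a continuous unital
algebra homomorphism out of `ι`-tuples of system matrices, so it commutes with `exp`. The total
Hamiltonian is the image of `(H_S + mₖ A)ₖ` and the initial state that of `(qₖ ρ_S)ₖ`, hence the
evolution splits into independent sectors, in which `exp (i t (H_S + mₖ A)) = Uₖ(t)†`.
The partial trace then turns `B ⊗ Πₖ` into `Tr(Πₖ) • B`. -/

open Matrix

/-- Tensor product `ρ ⊗ ρE` of a system matrix with an environment matrix. -/
noncomputable def kron2 (d dE : ℕ)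
    (ρ : Matrix (Fin d) (Fin d) ℂ) (ρE : Matrix (Fin dE) (Fin dE) ℂ) :
    Matrix (Fin d × Fin dE) (Fin d × Fin dE) ℂ :=
  Matrix.of fun x y => ρ x.1 y.1 * ρE x.2 y.2

/-- Partial trace over the environment factor. -/
noncomputable def trEnv (d dE : ℕ)
    (M : Matrix (Fin d × Fin dE) (Fin d × Fin dE) ℂ) :
    Matrix (Fin d) (Fin d) ℂ :=
  Matrix.of fun a b => ∑ k : Fin dE, M (a, k) (b, k)

/-- The conditional unitary `U_k(t) = e^{-i(H_S + m_k A)t}`. -/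
noncomputable def condU (dS : ℕ) (HS A : Matrix (Fin dS) (Fin dS) ℂ)
    (mk : ℝ) (t : ℝ) : Matrix (Fin dS) (Fin dS) ℂ :=
  NormedSpace.exp ((-(Complex.I * (t : ℂ))) • (HS + (mk : ℂ) • A))

open NormedSpace
open scoped Kronecker

theorem Matrix.kronecker_sum {ι l m n p R : Type*} [CommSemiring R] (s : Finset ι)
    (A : Matrix l m R) (B : ι → Matrix n p R) :
    A ⊗ₖ (∑ k ∈ s, B k) = ∑ k ∈ s, A ⊗ₖ B k :=
  map_sum (kroneckerBilinear (R := R) A) B s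

namespace CompleteOrthogonalIdempotents

variable {ι m n R : Type*} [Fintype ι] [Fintype m] [Fintype n] [DecidableEq m] [DecidableEq n]

section CommRing

variable [CommRing R] {P : ι → Matrix n n R} (hP : CompleteOrthogonalIdempotents P)

def kroneckerSum : (ι → Matrix m m R) →ₐ[R] Matrix (m × n) (m × n) R where
  toFun B := ∑ k, B k ⊗ₖ P k
  map_one' := by simp_rw [Pi.one_apply, ← kronecker_sum, hP.complete, one_kronecker_one]
  map_mul' B C := by
    classical
    simp [Finset.sum_mul_sum, ← mul_kronecker_mul, hP.mul_eq, apply_ite]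
  map_zero' := by simp
  map_add' B C := by simp [add_kronecker, Finset.sum_add_distrib]
  commutes' r := by
    simp [Algebra.algebraMap_eq_smul_one, smul_kronecker, ← Finset.smul_sum, ← kronecker_sum,
      hP.complete]

theorem kroneckerSum_apply (B : ι → Matrix m m R) : hP.kroneckerSum B = ∑ k, B k ⊗ₖ P k :=
  rfl

theorem kroneckerSum_smul_const (c : ι → R) (A : Matrix m m R) :
    hP.kroneckerSum (fun k => c k • A) = A ⊗ₖ ∑ k, c k • P k := by
  simp [kroneckerSum_apply, kronecker_sum, smul_kronecker, kronecker_smul]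

theorem kroneckerSum_const (A : Matrix m m R) : hP.kroneckerSum (fun _ => A) = A ⊗ₖ 1 := by
  simpa [hP.complete] using hP.kroneckerSum_smul_const 1 A

end CommRing

theorem exp_kroneckerSum {𝕜 : Type*} [RCLike 𝕜] {P : ι → Matrix n n 𝕜}
    (hP : CompleteOrthogonalIdempotents P) (B : ι → Matrix m m 𝕜) :
    exp (hP.kroneckerSum B) = hP.kroneckerSum (fun k => exp (B k)) := by
  -- `exp` only depends on the topology, so any Banach algebra norm inducing it may be used.
  open scoped Norms.Operator in
  exact (map_exp (hP.kroneckerSum (m := m))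
    (LinearMap.continuous_of_finiteDimensional (hP.kroneckerSum (m := m)).toLinearMap) B).symm.trans
    (congrArg _ (funext fun k => map_exp (Pi.evalRingHom _ k) (continuous_apply k) B))

end CompleteOrthogonalIdempotents

theorem kron2_eq_kronecker {d dE : ℕ} (ρ : Matrix (Fin d) (Fin d) ℂ)
    (ρE : Matrix (Fin dE) (Fin dE) ℂ) : kron2 d dE ρ ρE = ρ ⊗ₖ ρE :=
  rfl

theorem trEnv_kron2 {d dE : ℕ} (B : Matrix (Fin d) (Fin d) ℂ) (P : Matrix (Fin dE) (Fin dE) ℂ) :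
    trEnv d dE (kron2 d dE B P) = P.trace • B := by
  ext a b
  simp [trEnv, kron2, Matrix.trace, Finset.mul_sum, mul_comm]

theorem trEnv_sum {d dE : ℕ} {ι : Type*} [Fintype ι]
    (M : ι → Matrix (Fin d × Fin dE) (Fin d × Fin dE) ℂ) :
    trEnv d dE (∑ k, M k) = ∑ k, trEnv d dE (M k) := by
  ext a b
  simp only [trEnv, Matrix.of_apply, Matrix.sum_apply]
  exact Finset.sum_comm

theorem trEnv_smul {d dE : ℕ} (c : ℂ) (M : Matrix (Fin d × Fin dE) (Fin d × Fin dE) ℂ) :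
    trEnv d dE (c • M) = c • trEnv d dE M := by
  ext a b
  simp [trEnv, Finset.mul_sum]

theorem condU_conjTranspose {dS : ℕ} {HS A : Matrix (Fin dS) (Fin dS) ℂ} (hHS : HS.IsHermitian)
    (hA : A.IsHermitian) (mk t : ℝ) :
    (condU dS HS A mk t)ᴴ = exp ((Complex.I * (t : ℂ)) • (HS + (mk : ℂ) • A)) := by
  rw [condU, ← Matrix.exp_conjTranspose, conjTranspose_smul, conjTranspose_add, conjTranspose_smul,
    hHS.eq, hA.eq]
  simp

theorem stmt_16_general (dS dE : ℕ) (ι : Type) [Fintype ι]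
    (HS A : Matrix (Fin dS) (Fin dS) ℂ)
    (hHS : HS.IsHermitian) (hA : A.IsHermitian)
    (P : ι → Matrix (Fin dE) (Fin dE) ℂ)
    (horth : ∀ k l, k ≠ l → P k * P l = 0)
    (hsum : ∑ k : ι, P k = 1)
    (m : ι → ℝ) (q : ι → ℝ) :
    ∀ (ρS : Matrix (Fin dS) (Fin dS) ℂ) (t : ℝ),
      (NormedSpace.exp ((-(Complex.I * (t : ℂ))) •
          (kron2 dS dE HS 1 + kron2 dS dE A (∑ k : ι, (m k : ℂ) • P k))) *
        kron2 dS dE ρS (∑ k : ι, (q k : ℂ) • P k) *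
        NormedSpace.exp ((Complex.I * (t : ℂ)) •
          (kron2 dS dE HS 1 + kron2 dS dE A (∑ k : ι, (m k : ℂ) • P k)))
        = ∑ k : ι, (q k : ℂ) •
            kron2 dS dE (condU dS HS A (m k) t * ρS * (condU dS HS A (m k) t)ᴴ) (P k)) ∧
      trEnv dS dE
        (NormedSpace.exp ((-(Complex.I * (t : ℂ))) •
            (kron2 dS dE HS 1 + kron2 dS dE A (∑ k : ι, (m k : ℂ) • P k))) *
          kron2 dS dE ρS (∑ k : ι, (q k : ℂ) • P k) *
          NormedSpace.exp ((Complex.I * (t : ℂ)) •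
            (kron2 dS dE HS 1 + kron2 dS dE A (∑ k : ι, (m k : ℂ) • P k))))
        = ∑ k : ι, ((q k : ℂ) * (P k).trace) •
            (condU dS HS A (m k) t * ρS * (condU dS HS A (m k) t)ᴴ) := by
  intro ρS t
  have hP : CompleteOrthogonalIdempotents P :=
    CompleteOrthogonalIdempotents.iff_ortho_complete.mpr ⟨fun k l => horth k l, hsum⟩
  set HT := kron2 dS dE HS 1 + kron2 dS dE A (∑ k : ι, (m k : ℂ) • P k) with hHT_def
  have hHT : ∀ s : ℂ, s • HT = hP.kroneckerSum (fun k => s • (HS + (m k : ℂ) • A)) := by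
    intro s
    rw [hHT_def, kron2_eq_kronecker, kron2_eq_kronecker, ← hP.kroneckerSum_const,
      ← hP.kroneckerSum_smul_const, ← map_add, ← map_smul]
    rfl
  have hState : kron2 dS dE ρS (∑ k : ι, (q k : ℂ) • P k) =
      hP.kroneckerSum (fun k => (q k : ℂ) • ρS) :=
    (hP.kroneckerSum_smul_const _ ρS).symm
  have hEvol : exp ((-(Complex.I * (t : ℂ))) • HT) * kron2 dS dE ρS (∑ k : ι, (q k : ℂ) • P k) *
        exp ((Complex.I * (t : ℂ)) • HT)
      = ∑ k : ι, (q k : ℂ) •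
          kron2 dS dE (condU dS HS A (m k) t * ρS * (condU dS HS A (m k) t)ᴴ) (P k) := by
    rw [hHT, hHT, hState, hP.exp_kroneckerSum, hP.exp_kroneckerSum, ← map_mul, ← map_mul,
      hP.kroneckerSum_apply]
    refine Finset.sum_congr rfl fun k _ => ?_
    rw [Pi.mul_apply, Pi.mul_apply, mul_smul_comm, smul_mul_assoc, condU_conjTranspose hHS hA,
      kron2_eq_kronecker, smul_kronecker]
    rfl
  refine ⟨hEvol, ?_⟩
  rw [hEvol, trEnv_sum]
  refine Finset.sum_congr rfl fun k _ => ?_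
  rw [trEnv_smul, trEnv_kron2, smul_smul]

/-- Exact solution of the paper's spin-magnet model: for a system coupled to a
magnet via `H_T = H_S ⊗ 1 + A ⊗ m̂`, with `m̂ = Σ_k m_k Π_k` and the initial
magnet state `ρ_E = Σ_k q_k Π_k` a mixture over magnetisation sectors, the
global state stays of the form `Σ_k q_k (U_k(t) ρ_S U_k(t)†) ⊗ Π_k`, and the
reduced system state is the corresponding mixture of unitary evolutions. -/
theorem stmt_16 (dS dE : ℕ) (ι : Type) [Fintype ι]
    (HS A : Matrix (Fin dS) (Fin dS) ℂ)
    (hHS : HS.IsHermitian) (hA : A.IsHermitian)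
    (P : ι → Matrix (Fin dE) (Fin dE) ℂ)
    (hherm : ∀ k, (P k).IsHermitian)
    (hidem : ∀ k, P k * P k = P k)
    (horth : ∀ k l, k ≠ l → P k * P l = 0)
    (hsum : ∑ k : ι, P k = 1)
    (m : ι → ℝ) (q : ι → ℝ) (hq : ∀ k, 0 ≤ q k) :
    ∀ (ρS : Matrix (Fin dS) (Fin dS) ℂ) (t : ℝ),
      (NormedSpace.exp ((-(Complex.I * (t : ℂ))) •
          (kron2 dS dE HS 1 + kron2 dS dE A (∑ k : ι, (m k : ℂ) • P k))) *
        kron2 dS dE ρS (∑ k : ι, (q k : ℂ) • P k) *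
        NormedSpace.exp ((Complex.I * (t : ℂ)) •
          (kron2 dS dE HS 1 + kron2 dS dE A (∑ k : ι, (m k : ℂ) • P k)))
        = ∑ k : ι, (q k : ℂ) •
            kron2 dS dE (condU dS HS A (m k) t * ρS * (condU dS HS A (m k) t)ᴴ) (P k)) ∧
      trEnv dS dE
        (NormedSpace.exp ((-(Complex.I * (t : ℂ))) •
            (kron2 dS dE HS 1 + kron2 dS dE A (∑ k : ι, (m k : ℂ) • P k))) *
          kron2 dS dE ρS (∑ k : ι, (q k : ℂ) • P k) *
          NormedSpace.exp ((Complex.I * (t : ℂ)) •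
            (kron2 dS dE HS 1 + kron2 dS dE A (∑ k : ι, (m k : ℂ) • P k))))
        = ∑ k : ι, ((q k : ℂ) * (P k).trace) •
            (condU dS HS A (m k) t * ρS * (condU dS HS A (m k) t)ᴴ) :=
  stmt_16_general dS dE ι HS A hHS hA P horth hsum m q
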